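/- arXiv:2510.17294 — 2 statements merged into one kernel-verified Lean document; each statement's English description precedes it below -/
import Mathlib

section
/- Suppose m > 0 and Requirements 1 and 2 hold. Fix k ≥ 1 and a step size γ with 0 < γ ≤ 1/L_k, where L_k = λ_max(Q + m(4k−2)A). If x_k ∈ C and x_{k+1} = x_k − γ∇J_k(x_k), then x_{k+1} ∈ C; i.e., the feasible set C is positively invariant under the gradient descent step. -/
open Matrix Filter

noncomputable def fObj {n : ℕ} (Q : Matrix (Fin n) (Fin n) ℝ) (q : Fin n → ℝ) (x : Fin n → ℝ) : ℝ :=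
  (1 / 2) * (x ⬝ᵥ Q.mulVec x) + q ⬝ᵥ x

noncomputable def gCon {n : ℕ} (A : Matrix (Fin n) (Fin n) ℝ) (v : Fin n → ℝ) (x : Fin n → ℝ) : ℝ :=
  (x - v) ⬝ᵥ A.mulVec (x - v)

noncomputable def pPen {n : ℕ} (A : Matrix (Fin n) (Fin n) ℝ) (v : Fin n → ℝ) (m : ℝ) (k : ℕ)
    (x : Fin n → ℝ) : ℝ :=
  (m / (k : ℝ)) * (gCon A v x) ^ k

noncomputable def Jaux {n : ℕ} (Q : Matrix (Fin n) (Fin n) ℝ) (q : Fin n → ℝ)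
    (A : Matrix (Fin n) (Fin n) ℝ) (v : Fin n → ℝ) (m : ℝ) (k : ℕ) (x : Fin n → ℝ) : ℝ :=
  fObj Q q x + pPen A v m k x

noncomputable def gradF {n : ℕ} (Q : Matrix (Fin n) (Fin n) ℝ) (q : Fin n → ℝ)
    (x : Fin n → ℝ) : Fin n → ℝ :=
  Q.mulVec x + q

noncomputable def gradG {n : ℕ} (A : Matrix (Fin n) (Fin n) ℝ) (v : Fin n → ℝ)
    (x : Fin n → ℝ) : Fin n → ℝ :=
  (2 : ℝ) • A.mulVec (x - v)

noncomputable def gradJ {n : ℕ} (Q : Matrix (Fin n) (Fin n) ℝ) (q : Fin n → ℝ)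
    (A : Matrix (Fin n) (Fin n) ℝ) (v : Fin n → ℝ) (m : ℝ) (k : ℕ) (x : Fin n → ℝ) : Fin n → ℝ :=
  gradF Q q x + (m * (gCon A v x) ^ (k - 1)) • gradG A v x

noncomputable def lambdaMax {n : ℕ} (M : Matrix (Fin n) (Fin n) ℝ) : ℝ :=
  sSup {μ : ℝ | Module.End.HasEigenvalue (Matrix.toLin' M) μ}

noncomputable def lambdaMin {n : ℕ} (M : Matrix (Fin n) (Fin n) ℝ) : ℝ :=
  sInf {μ : ℝ | Module.End.HasEigenvalue (Matrix.toLin' M) μ}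

noncomputable def enormVec {n : ℕ} (w : Fin n → ℝ) : ℝ := Real.sqrt (w ⬝ᵥ w)

def Req1 {n : ℕ} (Q : Matrix (Fin n) (Fin n) ℝ) (q : Fin n → ℝ)
    (A : Matrix (Fin n) (Fin n) ℝ) (v : Fin n → ℝ) (m : ℝ) : Prop :=
  ∀ x : Fin n → ℝ, gCon A v x = 1 →
    0 ≤ gradG A v x ⬝ᵥ (gradF Q q x + m • gradG A v x)

noncomputable def Lsmooth {n : ℕ} (Q A : Matrix (Fin n) (Fin n) ℝ) (m : ℝ) (k : ℕ) : ℝ :=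
  lambdaMax (Q + (m * (4 * (k : ℝ) - 2)) • A)

def Req2 {n : ℕ} (Q : Matrix (Fin n) (Fin n) ℝ) (q : Fin n → ℝ)
    (A : Matrix (Fin n) (Fin n) ℝ) (v : Fin n → ℝ) (m : ℝ) : Prop :=
  ∀ x : Fin n → ℝ, gCon A v x = 1 →
    ((gradF Q q x + m • gradG A v x) ⬝ᵥ (gradF Q q x + m • gradG A v x)) * enormVec (gradG A v x) ≤
      2 * (Real.sqrt (lambdaMin A) / lambdaMax A) * Lsmooth Q A m 1 *
        ((gradF Q q x + m • gradG A v x) ⬝ᵥ gradG A v x)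

/-!
Write `L = L_k` and `F x = L • (x - v) - ∇J_k(x)`. The step of size `γ ≤ 1 / L` lies on the
segment between `x` and the step of size `1 / L`, which is `v + L⁻¹ • F x`; since `C` is convex it
suffices to show `‖F x‖_A ≤ L` on `C`. On the boundary `g = 1` this is what Requirements 1 and 2
give, using `L₁ ≤ L_k` and `‖∇g‖ ≥ 2 √λ_min(A)`. In the interior, one-sided `L`-smoothness of `J_k`
on `C` makes `F` monotone there, and a monotone map takes its largest `A`-norm on the boundary:
if `y ∈ ∂C` is reached from `x` in the direction `A F x`, then
`‖F x‖²_A ≤ ⟪F y, A F x⟫ ≤ ‖F y‖_A ‖F x‖_A`.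
-/

theorem sub_mul_pow_sub_pow_le {a b : ℝ} (ha₀ : 0 ≤ a) (ha₁ : a ≤ 1) (hb₀ : 0 ≤ b) (hb₁ : b ≤ 1)
    (N : ℕ) : (a - b) * (a ^ N - b ^ N) ≤ N * (a - b) ^ 2 := by
  have hmax : max |a| |b| ^ (N - 1) ≤ 1 :=
    pow_le_one₀ (le_max_of_le_left (abs_nonneg a))
      (max_le (abs_le.mpr ⟨by linarith, ha₁⟩) (abs_le.mpr ⟨by linarith, hb₁⟩))
  have hlip : |a ^ N - b ^ N| ≤ |a - b| * N :=
    (abs_pow_sub_pow_le a b N).trans (mul_le_of_le_one_right (by positivity) hmax)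
  calc (a - b) * (a ^ N - b ^ N) ≤ |a - b| * |a ^ N - b ^ N| := by
        rw [← abs_mul]; exact le_abs_self _
    _ ≤ |a - b| * (|a - b| * N) := by gcongr
    _ = N * (a - b) ^ 2 := by rw [← sq_abs (a - b)]; ring

theorem pow_succ_add_pow_succ_sub_mul_le (e : ℕ) {s₁ s₂ c : ℝ} (hs₁ : s₁ ∈ Set.Icc (0 : ℝ) 1)
    (hs₂ : s₂ ∈ Set.Icc (0 : ℝ) 1) (hc : c ^ 2 ≤ s₁ * s₂) :
    s₁ ^ (e + 1) + s₂ ^ (e + 1) - c * (s₁ ^ e + s₂ ^ e) ≤ (2 * e + 1) * (s₁ + s₂ - 2 * c) := by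
  obtain ⟨a, ha₀, rfl⟩ : ∃ a, 0 ≤ a ∧ a ^ 2 = s₁ := ⟨√s₁, Real.sqrt_nonneg _, Real.sq_sqrt hs₁.1⟩
  obtain ⟨b, hb₀, rfl⟩ : ∃ b, 0 ≤ b ∧ b ^ 2 = s₂ := ⟨√s₂, Real.sqrt_nonneg _, Real.sq_sqrt hs₂.1⟩
  have ha₁ : a ≤ 1 := by nlinarith [hs₁.2]
  have hb₁ : b ≤ 1 := by nlinarith [hs₂.2]
  have hcab : c ≤ a * b := by
    apply le_of_abs_le
    rw [← sq_le_sq₀ (abs_nonneg c) (by positivity), sq_abs]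
    linarith
  have hodd := sub_mul_pow_sub_pow_le ha₀ ha₁ hb₀ hb₁ (2 * e + 1)
  have hsum : (a ^ 2) ^ e + (b ^ 2) ^ e ≤ 2 := by
    have := pow_le_one₀ (sq_nonneg a) (pow_le_one₀ ha₀ ha₁ : a ^ 2 ≤ 1) (n := e)
    have := pow_le_one₀ (sq_nonneg b) (pow_le_one₀ hb₀ hb₁ : b ^ 2 ≤ 1) (n := e)
    linarith
  have hsplit : (a ^ 2) ^ (e + 1) + (b ^ 2) ^ (e + 1) - c * ((a ^ 2) ^ e + (b ^ 2) ^ e)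
      = (a - b) * (a ^ (2 * e + 1) - b ^ (2 * e + 1))
        + (a * b - c) * ((a ^ 2) ^ e + (b ^ 2) ^ e) := by ring
  push_cast at hodd
  rw [hsplit]
  nlinarith [mul_le_mul_of_nonneg_left hsum (sub_nonneg.mpr hcab)]

section QuadraticForm

variable {ι : Type*} [Fintype ι] {A : Matrix ι ι ℝ}

theorem dotProduct_self_nonneg (w : ι → ℝ) : 0 ≤ w ⬝ᵥ w :=
  Finset.sum_nonneg fun i _ => mul_self_nonneg (w i)

theorem Matrix.IsHermitian.dotProduct_mulVec_comm (hA : A.IsHermitian) (x y : ι → ℝ) :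
    x ⬝ᵥ A *ᵥ y = y ⬝ᵥ A *ᵥ x := by
  rw [dotProduct_mulVec, ← mulVec_transpose, dotProduct_comm,
    ← conjTranspose_eq_transpose_of_trivial, hA.eq]

theorem Matrix.PosSemidef.dotProduct_mulVec_sq_le (hA : A.PosSemidef) (x y : ι → ℝ) :
    (x ⬝ᵥ A *ᵥ y) ^ 2 ≤ (x ⬝ᵥ A *ᵥ x) * (y ⬝ᵥ A *ᵥ y) := by
  let := A.toSeminormedAddCommGroup hA
  let := A.toInnerProductSpace hA
  have hinner : ∀ a b : ι → ℝ, (inner ℝ a b : ℝ) = a ⬝ᵥ A *ᵥ b := fun _ _ => dotProduct_comm _ _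
  have := real_inner_mul_inner_self_le x y
  rwa [hinner, hinner, hinner, ← sq] at this

theorem Matrix.PosSemidef.convex_setOf_dotProduct_mulVec_le (hA : A.PosSemidef) (r : ℝ) :
    Convex ℝ {u : ι → ℝ | u ⬝ᵥ A *ᵥ u ≤ r} := by
  intro a ha b hb s t hs ht hst
  have hab := hA.dotProduct_mulVec_nonneg (a - b)
  have hsym := hA.isHermitian.dotProduct_mulVec_comm a b
  simp only [Set.mem_ofPred_eq, star_trivial, mulVec_sub, mulVec_add, mulVec_smul, dotProduct_sub,
    sub_dotProduct, dotProduct_add, add_dotProduct, dotProduct_smul, smul_dotProduct,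
    smul_eq_mul] at ha hb hab ⊢
  obtain rfl : t = 1 - s := by linarith
  nlinarith [mul_nonneg hs ht]

theorem Matrix.PosSemidef.pow_smul_mulVec_sub_dotProduct_le (hA : A.PosSemidef) (e : ℕ)
    {x y : ι → ℝ} (hx : x ⬝ᵥ A *ᵥ x ≤ 1) (hy : y ⬝ᵥ A *ᵥ y ≤ 1) :
    ((y ⬝ᵥ A *ᵥ y) ^ e • A *ᵥ y - (x ⬝ᵥ A *ᵥ x) ^ e • A *ᵥ x) ⬝ᵥ (y - x)
      ≤ (2 * e + 1) * ((y - x) ⬝ᵥ A *ᵥ (y - x)) := by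
  have hsym := hA.isHermitian.dotProduct_mulVec_comm x y
  have key := pow_succ_add_pow_succ_sub_mul_le e ⟨hA.dotProduct_mulVec_nonneg x, hx⟩
    ⟨hA.dotProduct_mulVec_nonneg y, hy⟩ (hA.dotProduct_mulVec_sq_le x y)
  simp only [star_trivial] at key
  calc _ = (x ⬝ᵥ A *ᵥ x) ^ (e + 1) + (y ⬝ᵥ A *ᵥ y) ^ (e + 1)
        - x ⬝ᵥ A *ᵥ y * ((x ⬝ᵥ A *ᵥ x) ^ e + (y ⬝ᵥ A *ᵥ y) ^ e) := by
        simp only [sub_dotProduct, dotProduct_sub, smul_dotProduct, smul_eq_mul,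
          dotProduct_comm (A *ᵥ _), hsym]
        ring
    _ ≤ _ := key
    _ = _ := by
        simp only [mulVec_sub, sub_dotProduct, dotProduct_sub, hsym]
        ring

theorem Matrix.PosDef.exists_pos_dotProduct_mulVec_add_smul_eq_one (hA : A.PosDef)
    {u w : ι → ℝ} (hu : u ⬝ᵥ A *ᵥ u < 1) (hw : w ≠ 0) :
    ∃ η : ℝ, 0 < η ∧ (u + η • w) ⬝ᵥ A *ᵥ (u + η • w) = 1 := by
  set φ : ℝ → ℝ := fun η => (u + η • w) ⬝ᵥ A *ᵥ (u + η • w)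
  have hφ : φ = fun η => u ⬝ᵥ A *ᵥ u + 2 * η * (u ⬝ᵥ A *ᵥ w) + η ^ 2 * (w ⬝ᵥ A *ᵥ w) := by
    ext η
    simp only [φ, mulVec_add, mulVec_smul, dotProduct_add, add_dotProduct, dotProduct_smul,
      smul_dotProduct, smul_eq_mul, hA.isHermitian.dotProduct_mulVec_comm w u]
    ring
  have hα : 0 < w ⬝ᵥ A *ᵥ w := by simpa using hA.dotProduct_mulVec_pos hw
  have hs : 0 ≤ u ⬝ᵥ A *ᵥ u := by simpa using hA.posSemidef.dotProduct_mulVec_nonneg u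
  set N := (2 * |u ⬝ᵥ A *ᵥ w| + 1) / (w ⬝ᵥ A *ᵥ w) + 1
  have hNα : 2 * |u ⬝ᵥ A *ᵥ w| + 1 ≤ N * (w ⬝ᵥ A *ᵥ w) := by
    rw [add_mul, div_mul_cancel₀ _ hα.ne', one_mul]; linarith
  have hN : 1 ≤ N := le_add_of_nonneg_left (by positivity)
  have hφN : φ 0 ≤ 1 ∧ 1 ≤ φ N := by
    rw [hφ]
    refine ⟨by simpa using hu.le, ?_⟩
    nlinarith [neg_abs_le (u ⬝ᵥ A *ᵥ w)]
  obtain ⟨η, ⟨hη₀, -⟩, hη⟩ :=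
    intermediate_value_Icc (by linarith) (hφ ▸ by fun_prop : Continuous φ).continuousOn hφN
  refine ⟨η, hη₀.lt_of_ne ?_, hη⟩
  rintro rfl
  exact hu.ne (by simpa [φ] using hη)

theorem Matrix.PosDef.dotProduct_mulVec_le_of_monotone_of_boundary (hA : A.PosDef) {v : ι → ℝ}
    {F : (ι → ℝ) → ι → ℝ} {R : ℝ}
    (hmono : ∀ x y, (x - v) ⬝ᵥ A *ᵥ (x - v) ≤ 1 → (y - v) ⬝ᵥ A *ᵥ (y - v) ≤ 1 →
      0 ≤ (F y - F x) ⬝ᵥ (y - x))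
    (hbdry : ∀ y, (y - v) ⬝ᵥ A *ᵥ (y - v) = 1 → F y ⬝ᵥ A *ᵥ F y ≤ R ^ 2)
    {x : ι → ℝ} (hx : (x - v) ⬝ᵥ A *ᵥ (x - v) ≤ 1) : F x ⬝ᵥ A *ᵥ F x ≤ R ^ 2 := by
  rcases hx.eq_or_lt with hx | hx
  · exact hbdry x hx
  rcases eq_or_ne (A *ᵥ F x) 0 with hw | hw
  · rw [hw, dotProduct_zero]; positivity
  obtain ⟨η, hη, hy⟩ := hA.exists_pos_dotProduct_mulVec_add_smul_eq_one hx hw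
  set y := x + η • A *ᵥ F x
  rw [sub_add_eq_add_sub] at hy
  have hmon : F x ⬝ᵥ A *ᵥ F x ≤ F y ⬝ᵥ A *ᵥ F x := by
    have := hmono x y hx.le hy.le
    rw [add_sub_cancel_left, dotProduct_smul, smul_eq_mul, sub_dotProduct] at this
    linarith [nonneg_of_mul_nonneg_right this hη]
  have hcs := hA.posSemidef.dotProduct_mulVec_sq_le (F y) (F x)
  have hFx : 0 ≤ F x ⬝ᵥ A *ᵥ F x := by simpa using hA.posSemidef.dotProduct_mulVec_nonneg (F x)
  nlinarith [hbdry y hy]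

end QuadraticForm

section Spectrum

variable {ι : Type*} [Fintype ι] [DecidableEq ι] {M : Matrix ι ι ℝ}

theorem Matrix.IsHermitian.dotProduct_mulVec_le_of_spectrum_le (hM : M.IsHermitian) {c : ℝ}
    (hc : ∀ μ ∈ spectrum ℝ M, μ ≤ c) (w : ι → ℝ) : w ⬝ᵥ M *ᵥ w ≤ c * (w ⬝ᵥ w) := by
  have hpsd : (c • 1 - M).PosSemidef := by
    refine posSemidef_iff_isHermitian_and_spectrum_nonneg.mpr
      ⟨(isHermitian_one.smul (IsSelfAdjoint.all c)).sub hM, ?_⟩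
    rw [← Algebra.algebraMap_eq_smul_one, ← spectrum.singleton_sub_eq]
    rintro _ ⟨_, rfl, μ, hμ, rfl⟩
    exact sub_nonneg.mpr (hc μ hμ)
  have := hpsd.dotProduct_mulVec_nonneg w
  rwa [star_trivial, sub_mulVec, smul_mulVec, one_mulVec, dotProduct_sub, dotProduct_smul,
    smul_eq_mul, sub_nonneg] at this

theorem Matrix.IsHermitian.le_dotProduct_mulVec_of_le_spectrum (hM : M.IsHermitian) {c : ℝ}
    (hc : ∀ μ ∈ spectrum ℝ M, c ≤ μ) (w : ι → ℝ) : c * (w ⬝ᵥ w) ≤ w ⬝ᵥ M *ᵥ w := by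
  have hpsd : (M - c • 1).PosSemidef := by
    refine posSemidef_iff_isHermitian_and_spectrum_nonneg.mpr
      ⟨hM.sub (isHermitian_one.smul (IsSelfAdjoint.all c)), ?_⟩
    rw [← Algebra.algebraMap_eq_smul_one, ← spectrum.sub_singleton_eq]
    rintro _ ⟨μ, hμ, _, rfl, rfl⟩
    exact sub_nonneg.mpr (hc μ hμ)
  have := hpsd.dotProduct_mulVec_nonneg w
  rwa [star_trivial, sub_mulVec, smul_mulVec, one_mulVec, dotProduct_sub, dotProduct_smul,
    smul_eq_mul, sub_nonneg] at this

theorem Matrix.exists_dotProduct_mulVec_eq_of_mem_spectrum {μ : ℝ} (hμ : μ ∈ spectrum ℝ M) :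
    ∃ w : ι → ℝ, w ≠ 0 ∧ w ⬝ᵥ M *ᵥ w = μ * (w ⬝ᵥ w) := by
  rw [← spectrum_toLin', ← Module.End.hasEigenvalue_iff_mem_spectrum] at hμ
  obtain ⟨w, hw⟩ := hμ.exists_hasEigenvector
  refine ⟨w, hw.2, ?_⟩
  rw [← toLin'_apply, hw.apply_eq_smul, dotProduct_smul, smul_eq_mul]

end Spectrum

section ExtremeEigenvalues

variable {n : ℕ} {M : Matrix (Fin n) (Fin n) ℝ}

theorem setOf_hasEigenvalue_toLin'_eq_spectrum (M : Matrix (Fin n) (Fin n) ℝ) :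
    {μ : ℝ | Module.End.HasEigenvalue (toLin' M) μ} = spectrum ℝ M := by
  ext μ
  rw [Set.mem_ofPred_eq, Module.End.hasEigenvalue_iff_mem_spectrum, spectrum_toLin']

theorem le_lambdaMax {μ : ℝ} (hμ : μ ∈ spectrum ℝ M) : μ ≤ lambdaMax M := by
  rw [lambdaMax, setOf_hasEigenvalue_toLin'_eq_spectrum]
  exact le_csSup M.finite_spectrum.bddAbove hμ

theorem lambdaMin_le {μ : ℝ} (hμ : μ ∈ spectrum ℝ M) : lambdaMin M ≤ μ := by
  rw [lambdaMin, setOf_hasEigenvalue_toLin'_eq_spectrum]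
  exact csInf_le M.finite_spectrum.bddBelow hμ

theorem Matrix.IsHermitian.dotProduct_mulVec_le_lambdaMax (hM : M.IsHermitian) (w : Fin n → ℝ) :
    w ⬝ᵥ M *ᵥ w ≤ lambdaMax M * (w ⬝ᵥ w) :=
  hM.dotProduct_mulVec_le_of_spectrum_le (fun _ => le_lambdaMax) w

theorem Matrix.IsHermitian.lambdaMin_le_dotProduct_mulVec (hM : M.IsHermitian) (w : Fin n → ℝ) :
    lambdaMin M * (w ⬝ᵥ w) ≤ w ⬝ᵥ M *ᵥ w :=
  hM.le_dotProduct_mulVec_of_le_spectrum (fun _ => lambdaMin_le) w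

theorem lambdaMin_le_mulVec_dotProduct_mulVec (hA : A.IsHermitian) {u : Fin n → ℝ}
    (hu : u ⬝ᵥ A *ᵥ u = 1) : lambdaMin A ≤ A *ᵥ u ⬝ᵥ A *ᵥ u := by
  have hray := hA.lambdaMin_le_dotProduct_mulVec u
  have hcs := (PosSemidef.one (n := Fin n) (R := ℝ)).dotProduct_mulVec_sq_le u (A *ᵥ u)
  rw [hu] at hray
  simp only [one_mulVec, hu] at hcs
  have huu := dotProduct_self_nonneg u
  have hAu := dotProduct_self_nonneg (A *ᵥ u)
  rcases le_or_gt (lambdaMin A) 0 with hneg | hpos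
  · linarith
  · nlinarith

variable [Nonempty (Fin n)]

theorem Matrix.IsHermitian.spectrum_nonempty (hM : M.IsHermitian) : (spectrum ℝ M).Nonempty :=
  hM.spectrum_real_eq_range_eigenvalues ▸ Set.range_nonempty _

theorem Matrix.IsHermitian.lambdaMax_le (hM : M.IsHermitian) {c : ℝ}
    (hc : ∀ w : Fin n → ℝ, w ⬝ᵥ M *ᵥ w ≤ c * (w ⬝ᵥ w)) : lambdaMax M ≤ c := by
  rw [lambdaMax, setOf_hasEigenvalue_toLin'_eq_spectrum]
  refine csSup_le hM.spectrum_nonempty fun μ hμ => ?_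
  obtain ⟨w, hw, hμw⟩ := exists_dotProduct_mulVec_eq_of_mem_spectrum hμ
  have hww : 0 < w ⬝ᵥ w := by simpa using dotProduct_star_self_pos_iff.mpr hw
  nlinarith [hc w]

theorem Matrix.PosDef.lambdaMin_pos (hM : M.PosDef) : 0 < lambdaMin M := by
  have hmem : lambdaMin M ∈ spectrum ℝ M := by
    rw [lambdaMin, setOf_hasEigenvalue_toLin'_eq_spectrum]
    exact hM.isHermitian.spectrum_nonempty.csInf_mem M.finite_spectrum
  obtain ⟨w, hw, hμw⟩ := exists_dotProduct_mulVec_eq_of_mem_spectrum hmem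
  have hww : 0 < w ⬝ᵥ w := by simpa using dotProduct_star_self_pos_iff.mpr hw
  have hpos := hM.dotProduct_mulVec_pos hw
  rw [star_trivial, hμw] at hpos
  exact pos_of_mul_pos_left hpos hww.le

end ExtremeEigenvalues

section GradientStep

variable {n : ℕ} {Q A : Matrix (Fin n) (Fin n) ℝ} {q v x y : Fin n → ℝ} {m : ℝ}

theorem dotProduct_mulVec_le_Lsmooth (hQ : Q.IsHermitian) (hA : A.IsHermitian) (k : ℕ)
    (w : Fin n → ℝ) :
    w ⬝ᵥ Q *ᵥ w + m * (4 * k - 2) * (w ⬝ᵥ A *ᵥ w) ≤ Lsmooth Q A m k * (w ⬝ᵥ w) := by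
  have hM := hQ.add (hA.smul (IsSelfAdjoint.all (m * (4 * k - 2))))
  have := hM.dotProduct_mulVec_le_lambdaMax w
  rwa [add_mulVec, smul_mulVec, dotProduct_add, dotProduct_smul, smul_eq_mul] at this

theorem Lsmooth_mono [Nonempty (Fin n)] (hQ : Q.IsHermitian) (hA : A.PosSemidef) (hm : 0 ≤ m)
    {j k : ℕ} (hjk : j ≤ k) : Lsmooth Q A m j ≤ Lsmooth Q A m k := by
  refine (hQ.add (hA.isHermitian.smul (IsSelfAdjoint.all _))).lambdaMax_le fun w => ?_
  have hjk' : (j : ℝ) ≤ k := by exact_mod_cast hjk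
  have hwAw := hA.dotProduct_mulVec_nonneg w
  rw [star_trivial] at hwAw
  rw [add_mulVec, smul_mulVec, dotProduct_add, dotProduct_smul, smul_eq_mul]
  nlinarith [dotProduct_mulVec_le_Lsmooth (m := m) hQ hA.isHermitian k w,
    mul_nonneg (mul_nonneg hm (sub_nonneg.mpr hjk')) hwAw]

/-- This is where `L_k` comes from: the penalty part of `∇J_k` contributes `2m(2k-1)A`. -/
theorem gradJ_sub_dotProduct_le (hQ : Q.IsHermitian) (hA : A.PosSemidef) (hm : 0 ≤ m)
    {k : ℕ} (hk : 1 ≤ k) (hx : gCon A v x ≤ 1) (hy : gCon A v y ≤ 1) :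
    (gradJ Q q A v m k y - gradJ Q q A v m k x) ⬝ᵥ (y - x)
      ≤ Lsmooth Q A m k * ((y - x) ⬝ᵥ (y - x)) := by
  obtain ⟨e, rfl⟩ : ∃ e, k = e + 1 := ⟨k - 1, by omega⟩
  have hpen := hA.pow_smul_mulVec_sub_dotProduct_le e hx hy
  rw [sub_sub_sub_cancel_right] at hpen
  have hL := dotProduct_mulVec_le_Lsmooth (m := m) hQ hA.isHermitian (e + 1) (y - x)
  have hdiff : gradJ Q q A v m (e + 1) y - gradJ Q q A v m (e + 1) x
      = Q *ᵥ (y - x)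
        + (2 * m) • (gCon A v y ^ e • A *ᵥ (y - v) - gCon A v x ^ e • A *ᵥ (x - v)) := by
    simp only [gradJ, gradF, gradG, add_tsub_cancel_right, mulVec_sub, smul_smul]
    module
  rw [hdiff, add_dotProduct, smul_dotProduct, smul_eq_mul, dotProduct_comm]
  unfold gCon
  push_cast at hL
  nlinarith [mul_le_mul_of_nonneg_left hpen (by positivity : (0 : ℝ) ≤ 2 * m)]

theorem gradJ_of_gCon_eq_one (k : ℕ) (hx : gCon A v x = 1) :
    gradJ Q q A v m k x = gradF Q q x + m • gradG A v x := by
  rw [gradJ, hx, one_pow, mul_one]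

theorem two_sqrt_lambdaMin_le_enormVec_gradG (hA : A.IsHermitian) (hx : gCon A v x = 1) :
    2 * √(lambdaMin A) ≤ enormVec (gradG A v x) := by
  have hnorm : enormVec (gradG A v x) = 2 * √(A *ᵥ (x - v) ⬝ᵥ A *ᵥ (x - v)) := by
    rw [enormVec, gradG, smul_dotProduct, dotProduct_smul, smul_eq_mul, smul_eq_mul, ← mul_assoc,
      Real.sqrt_mul (by norm_num), show (2 : ℝ) * 2 = 2 ^ 2 by norm_num, Real.sqrt_sq zero_le_two]
  rw [hnorm]
  gcongr
  exact lambdaMin_le_mulVec_dotProduct_mulVec hA hx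

theorem lambdaMax_mul_dotProduct_self_le [Nonempty (Fin n)] (hA : A.PosDef)
    (hreq2 : Req2 Q q A v m) (hx : gCon A v x = 1) :
    lambdaMax A * ((gradF Q q x + m • gradG A v x) ⬝ᵥ (gradF Q q x + m • gradG A v x))
      ≤ Lsmooth Q A m 1 * ((gradF Q q x + m • gradG A v x) ⬝ᵥ gradG A v x) := by
  set h := gradF Q q x + m • gradG A v x
  have hS : 0 < √(lambdaMin A) := Real.sqrt_pos.mpr hA.lambdaMin_pos
  have hmax : 0 < lambdaMax A := by
    have := hA.isHermitian.dotProduct_mulVec_le_lambdaMax (x - v)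
    rw [← gCon, hx] at this
    exact pos_of_mul_pos_left (one_pos.trans_le this) (dotProduct_self_nonneg _)
  have hreq := (mul_le_mul_of_nonneg_left (two_sqrt_lambdaMin_le_enormVec_gradG hA.isHermitian hx)
    (dotProduct_self_nonneg h)).trans (hreq2 x hx)
  calc lambdaMax A * (h ⬝ᵥ h)
        = lambdaMax A / (2 * √(lambdaMin A)) * ((h ⬝ᵥ h) * (2 * √(lambdaMin A))) := by
        field_simp
    _ ≤ lambdaMax A / (2 * √(lambdaMin A))
          * (2 * (√(lambdaMin A) / lambdaMax A) * Lsmooth Q A m 1 * (h ⬝ᵥ gradG A v x)) := by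
        gcongr
    _ = Lsmooth Q A m 1 * (h ⬝ᵥ gradG A v x) := by
        field_simp

theorem smul_sub_gradJ_bound_of_gCon_eq_one [Nonempty (Fin n)] (hA : A.PosDef)
    (hreq1 : Req1 Q q A v m) (hreq2 : Req2 Q q A v m) {L : ℝ} (hL : Lsmooth Q A m 1 ≤ L) (k : ℕ)
    (hx : gCon A v x = 1) :
    (L • (x - v) - gradJ Q q A v m k x) ⬝ᵥ A *ᵥ (L • (x - v) - gradJ Q q A v m k x) ≤ L ^ 2 := by
  rw [gradJ_of_gCon_eq_one k hx]
  set h := gradF Q q x + m • gradG A v x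
  have hG : 0 ≤ h ⬝ᵥ gradG A v x := dotProduct_comm h _ ▸ hreq1 x hx
  have hAh : h ⬝ᵥ A *ᵥ h ≤ L * (h ⬝ᵥ gradG A v x) :=
    calc h ⬝ᵥ A *ᵥ h ≤ lambdaMax A * (h ⬝ᵥ h) := hA.isHermitian.dotProduct_mulVec_le_lambdaMax h
      _ ≤ Lsmooth Q A m 1 * (h ⬝ᵥ gradG A v x) := lambdaMax_mul_dotProduct_self_le hA hreq2 hx
      _ ≤ L * (h ⬝ᵥ gradG A v x) := mul_le_mul_of_nonneg_right hL hG
  simp only [gradG, dotProduct_smul, smul_eq_mul] at hAh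
  set u := x - v
  have hu : u ⬝ᵥ A *ᵥ u = 1 := hx
  have hsym := hA.isHermitian.dotProduct_mulVec_comm h u
  simp only [mulVec_sub, mulVec_smul, dotProduct_sub, sub_dotProduct, dotProduct_smul,
    smul_dotProduct, smul_eq_mul, hsym, hu]
  rw [hsym] at hAh
  nlinarith

theorem convex_setOf_gCon_le (hA : A.PosSemidef) (v : Fin n → ℝ) :
    Convex ℝ {x | gCon A v x ≤ 1} := by
  have hset : {x | gCon A v x ≤ 1} = (fun x => -v + x) ⁻¹' {u | u ⬝ᵥ A *ᵥ u ≤ 1} := by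
    ext x
    rw [Set.mem_preimage, Set.mem_ofPred_eq, Set.mem_ofPred_eq, gCon, neg_add_eq_sub]
  rw [hset]
  exact (hA.convex_setOf_dotProduct_mulVec_le 1).translate_preimage_right (-v)

theorem smul_sub_gradJ_bound [Nonempty (Fin n)] (hQ : Q.IsHermitian) (hA : A.PosDef)
    (hm : 0 ≤ m) (hreq1 : Req1 Q q A v m) (hreq2 : Req2 Q q A v m) {k : ℕ} (hk : 1 ≤ k)
    (hx : gCon A v x ≤ 1) :
    (Lsmooth Q A m k • (x - v) - gradJ Q q A v m k x) ⬝ᵥ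
      A *ᵥ (Lsmooth Q A m k • (x - v) - gradJ Q q A v m k x) ≤ Lsmooth Q A m k ^ 2 := by
  have hL₁ := Lsmooth_mono hQ hA.posSemidef hm hk
  refine hA.dotProduct_mulVec_le_of_monotone_of_boundary (fun x y hx hy => ?_)
    (fun y hy => smul_sub_gradJ_bound_of_gCon_eq_one hA hreq1 hreq2 hL₁ k hy) hx
  have := gradJ_sub_dotProduct_le (q := q) hQ hA.posSemidef hm hk hx hy
  rw [sub_sub_sub_comm, ← smul_sub, sub_sub_sub_cancel_right, sub_dotProduct, smul_dotProduct,
    smul_eq_mul]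
  linarith

end GradientStep

/-- Under `m > 0` and Requirements 1–2, for `k ≥ 1` and step size
`0 < γ ≤ 1/L_k` with `L_k = λ_max(Q + m(4k−2)A)`, a gradient descent step
`x_{k+1} = x_k − γ ∇J_k(x_k)` starting at `x_k ∈ C` stays in `C`:
the feasible set is positively invariant. -/
theorem feasible_set_positively_invariant {n : ℕ} (hn : 1 ≤ n)
    (Q A : Matrix (Fin n) (Fin n) ℝ) (q v : Fin n → ℝ)
    (hQ : Q.PosSemidef) (hA : A.PosDef) (m : ℝ) (hm : 0 < m)
    (hreq1 : Req1 Q q A v m) (hreq2 : Req2 Q q A v m)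
    (k : ℕ) (hk : 1 ≤ k) (γ : ℝ) (hγ0 : 0 < γ) (hγ : γ ≤ 1 / Lsmooth Q A m k)
    (xk : Fin n → ℝ) (hxk : gCon A v xk ≤ 1) :
    gCon A v (xk - γ • gradJ Q q A v m k xk) ≤ 1 := by
  have : Nonempty (Fin n) := ⟨⟨0, hn⟩⟩
  set L := Lsmooth Q A m k
  have hL : 0 < L := one_div_pos.mp (hγ0.trans_le hγ)
  set T := L • (xk - v) - gradJ Q q A v m k xk
  -- `v + L⁻¹ • T` is the step of size `1 / L`; the step of size `γ` lies between it and `xk`.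
  have hT : gCon A v (v + L⁻¹ • T) ≤ 1 := by
    have hbound := smul_sub_gradJ_bound hQ.isHermitian hA hm.le hreq1 hreq2 hk hxk
    rw [gCon, add_sub_cancel_left, mulVec_smul, dotProduct_smul, smul_dotProduct, smul_eq_mul,
      smul_eq_mul, ← mul_assoc, ← sq, inv_pow]
    exact inv_mul_le_one_of_le₀ hbound (by positivity)
  have ht : γ * L ∈ Set.Icc (0 : ℝ) 1 :=
    ⟨by positivity, by rwa [le_div_iff₀ hL] at hγ⟩
  have hstep := (convex_setOf_gCon_le hA.posSemidef v).add_smul_sub_mem hxk hT ht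
  rw [Set.mem_ofPred_eq] at hstep
  convert hstep using 2
  rw [smul_sub, smul_add, smul_smul, mul_assoc, mul_inv_cancel₀ hL.ne', mul_one]
  simp only [T]
  module
end

section
/- Fix k ≥ 1, m ≥ 0, γ > 0, c ≥ 0, and x_k ∈ ℝⁿ with g(x_k) = c. Let x_{k+1} = x_k − γ∇J_k(x_k), and define T_c = I − γ(Q + 2m·c^{k−1}·A) and v' = v − γ(q + Qv). If T_c is invertible, then (x_{k+1} − v')ᵀ T_c^{−1} A T_c^{−1} (x_{k+1} − v') = c; equivalently x_{k+1} − v' = T_c(x_k − v), so the gradient step maps the level set {x : g(x) = c} onto the ellipsoidal surface {y : (y−v')ᵀT_c^{−1}AT_c^{−1}(y−v') = c}. -/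
open Matrix Filter

/-!
On the level set `g = c` the penalty weight `2m·g(x)^{k-1}` in `∇J_k` is the constant
`2m·c^{k-1}`, so the gradient step is affine there: `x_{k+1} - v' = T_c (x_k - v)`.
Since `T_c` is symmetric, `(T_c y)ᵀ T_c⁻¹ A T_c⁻¹ (T_c y) = yᵀ A y`, which for `y = x_k - v`
is `g(x_k) = c`.
-/

theorem Matrix.mulVec_dotProduct_inv_mul_mul_inv_mulVec {ι R : Type*} [Fintype ι] [DecidableEq ι]
    [CommRing R] {T : Matrix ι ι R} (hT : T.IsSymm) (hTu : IsUnit T) (A : Matrix ι ι R)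
    (x : ι → R) :
    T *ᵥ x ⬝ᵥ (T⁻¹ * A * T⁻¹) *ᵥ (T *ᵥ x) = x ⬝ᵥ A *ᵥ x := by
  have hdet : IsUnit T.det := (isUnit_iff_isUnit_det T).mp hTu
  have hconj : T * (T⁻¹ * A * T⁻¹) * T = A := by
    rw [Matrix.mul_assoc, Matrix.mul_assoc (T⁻¹ * A), nonsing_inv_mul T hdet, Matrix.mul_one,
      ← Matrix.mul_assoc, mul_nonsing_inv T hdet, Matrix.one_mul]
  rw [dotProduct_mulVec, vecMul_mulVec, ← dotProduct_mulVec, mulVec_mulVec, hT.eq, hconj]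

theorem sub_smul_gradJ_sub_eq_mulVec {n : ℕ} (Q A : Matrix (Fin n) (Fin n) ℝ) (q v : Fin n → ℝ)
    (m : ℝ) (k : ℕ) (γ : ℝ) (x : Fin n → ℝ) :
    x - γ • gradJ Q q A v m k x - (v - γ • (q + Q *ᵥ v)) =
      (1 - γ • (Q + (2 * m * gCon A v x ^ (k - 1)) • A)) *ᵥ (x - v) := by
  simp only [gradJ, gradF, gradG, sub_mulVec, add_mulVec, one_mulVec, smul_mulVec, mulVec_sub,
    smul_smul]
  module

theorem gradient_step_maps_level_sets_general {n : ℕ}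
    (Q A : Matrix (Fin n) (Fin n) ℝ) (q v : Fin n → ℝ)
    (hQ : Q.PosSemidef) (hA : A.PosDef) (m : ℝ)
    (k : ℕ) (γ : ℝ) (c : ℝ)
    (xk : Fin n → ℝ) (hgxk : gCon A v xk = c)
    (hTc : IsUnit ((1 : Matrix (Fin n) (Fin n) ℝ) - γ • (Q + (2 * m * c ^ (k - 1)) • A))) :
    (xk - γ • gradJ Q q A v m k xk - (v - γ • (q + Q.mulVec v))) ⬝ᵥ
        (((1 : Matrix (Fin n) (Fin n) ℝ) - γ • (Q + (2 * m * c ^ (k - 1)) • A))⁻¹ * A *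
          ((1 : Matrix (Fin n) (Fin n) ℝ) - γ • (Q + (2 * m * c ^ (k - 1)) • A))⁻¹).mulVec
          (xk - γ • gradJ Q q A v m k xk - (v - γ • (q + Q.mulVec v))) = c ∧
      xk - γ • gradJ Q q A v m k xk - (v - γ • (q + Q.mulVec v)) =
        ((1 : Matrix (Fin n) (Fin n) ℝ) - γ • (Q + (2 * m * c ^ (k - 1)) • A)).mulVec (xk - v) := by
  have hstep := sub_smul_gradJ_sub_eq_mulVec Q A q v m k γ xk
  rw [hgxk] at hstep
  have hsymm : (1 - γ • (Q + (2 * m * c ^ (k - 1)) • A)).IsSymm :=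
    isSymm_one.sub (((isHermitian_iff_isSymm.mp hQ.isHermitian).add
      ((isHermitian_iff_isSymm.mp hA.isHermitian).smul _)).smul γ)
  refine ⟨?_, hstep⟩
  rw [hstep, Matrix.mulVec_dotProduct_inv_mul_mul_inv_mulVec hsymm hTc]
  exact hgxk

/-- With `g(x_k) = c`, `x_{k+1} = x_k − γ∇J_k(x_k)`,
`T_c = I − γ(Q + 2m c^{k−1} A)`, and `v' = v − γ(q + Qv)`, if `T_c` is invertible then
`(x_{k+1} − v')ᵀ T_c⁻¹ A T_c⁻¹ (x_{k+1} − v') = c`; equivalently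
`x_{k+1} − v' = T_c (x_k − v)`, so the gradient step maps the level set
`{x : g(x) = c}` onto the ellipsoidal surface `{y : (y−v')ᵀ T_c⁻¹ A T_c⁻¹ (y−v') = c}`. -/
theorem gradient_step_maps_level_sets {n : ℕ} (hn : 1 ≤ n)
    (Q A : Matrix (Fin n) (Fin n) ℝ) (q v : Fin n → ℝ)
    (hQ : Q.PosSemidef) (hA : A.PosDef) (m : ℝ) (hm : 0 ≤ m)
    (k : ℕ) (hk : 1 ≤ k) (γ : ℝ) (hγ : 0 < γ) (c : ℝ) (hc : 0 ≤ c)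
    (xk : Fin n → ℝ) (hgxk : gCon A v xk = c)
    (hTc : IsUnit ((1 : Matrix (Fin n) (Fin n) ℝ) - γ • (Q + (2 * m * c ^ (k - 1)) • A))) :
    (xk - γ • gradJ Q q A v m k xk - (v - γ • (q + Q.mulVec v))) ⬝ᵥ
        (((1 : Matrix (Fin n) (Fin n) ℝ) - γ • (Q + (2 * m * c ^ (k - 1)) • A))⁻¹ * A *
          ((1 : Matrix (Fin n) (Fin n) ℝ) - γ • (Q + (2 * m * c ^ (k - 1)) • A))⁻¹).mulVec
          (xk - γ • gradJ Q q A v m k xk - (v - γ • (q + Q.mulVec v))) = c ∧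
      xk - γ • gradJ Q q A v m k xk - (v - γ • (q + Q.mulVec v)) =
        ((1 : Matrix (Fin n) (Fin n) ℝ) - γ • (Q + (2 * m * c ^ (k - 1)) • A)).mulVec (xk - v) :=
  gradient_step_maps_level_sets_general Q A q v hQ hA m k γ c xk hgxk hTc
end
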